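/- arXiv:1710.09072 — 3 statements merged into one kernel-verified Lean document; each statement's English description precedes it below -/
import Mathlib

section
/- Let ℓ: ℝ → ℝ₊ be a loss function with ℓ(0)=0, ℓ even, nondecreasing and convex on ℝ₊. For any random variables ξ, η and any A > 0: |E ℓ(ξ) − E ℓ(η)| ≤ 4ℓ(A)·Δ(ξ,η) + E[ℓ(ξ)·1{|ξ|≥A}] + E[ℓ(η)·1{|η|≥A}], where Δ(ξ,η) := sup_{x∈ℝ}|P(ξ≤x) − P(η≤x)|. -/
/-!
Since `ℓ x = ℓ |x|` and `ℓ` is monotone in `|x|`, for `t ≥ 0` the superlevel set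
`{x | |x| < A ∧ t < ℓ x}` is an interval with a subinterval removed. A bound `Δ` on the
difference of the distribution functions bounds the difference of the masses of every lower set
(a half-line) by `Δ`, hence of every interval by `2Δ`, hence of these superlevel sets by `4Δ`.
The layer-cake formula for `ℓ · 1{|x| < A}`, which takes values in `[0, ℓ A]`, turns this into
the bound `4 ℓ(A) Δ` for the truncated expectations; the two tails are nonnegative.
-/

open MeasureTheory Set Filter Topology

lemma abs_measureReal_sdiff_sub_le {α : Type*} [MeasurableSpace α] {P Q : Measure α}
    [IsFiniteMeasure P] [IsFiniteMeasure Q] {s t : Set α} (hts : t ⊆ s) (ht : MeasurableSet t) :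
    |P.real (s \ t) - Q.real (s \ t)| ≤ |P.real s - Q.real s| + |P.real t - Q.real t| := by
  rw [measureReal_sdiff hts ht, measureReal_sdiff hts ht, sub_sub_sub_comm]
  exact abs_sub _ _

section CDFComparison

variable {P Q : Measure ℝ} {D : ℝ}

lemma abs_measureReal_Iio_sub_le [IsFiniteMeasure P] [IsFiniteMeasure Q]
    (h : ∀ x, |P.real (Iic x) - Q.real (Iic x)| ≤ D) (x : ℝ) :
    |P.real (Iio x) - Q.real (Iio x)| ≤ D := by
  obtain ⟨u, hu_mono, hu_lt, hu_lim⟩ := exists_seq_strictMono_tendsto x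
  have hunion : ⋃ n, Iic (u n) = Iio x := iUnion_Iic_eq_Iio_of_lt_of_tendsto hu_lt hu_lim
  have hmono : Monotone fun n => Iic (u n) := fun _ _ hmn =>
    Iic_subset_Iic.2 (hu_mono.monotone hmn)
  have hlim (ρ : Measure ℝ) [IsFiniteMeasure ρ] :
      Tendsto (fun n => ρ.real (Iic (u n))) atTop (𝓝 (ρ.real (Iio x))) := by
    rw [← hunion]
    exact (ENNReal.tendsto_toReal (measure_ne_top ρ _)).comp (tendsto_measure_iUnion_atTop hmono)
  exact le_of_tendsto ((hlim P).sub (hlim Q)).abs (Eventually.of_forall fun n => h (u n))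

variable [IsProbabilityMeasure P] [IsProbabilityMeasure Q]

lemma IsLowerSet.abs_measureReal_sub_le {s : Set ℝ} (hs : IsLowerSet s)
    (h : ∀ x, |P.real (Iic x) - Q.real (Iic x)| ≤ D) :
    |P.real s - Q.real s| ≤ D := by
  have hD : 0 ≤ D := (abs_nonneg _).trans (h 0)
  rcases s.eq_empty_or_nonempty with rfl | hne
  · simpa using hD
  by_cases hbdd : BddAbove s
  · have hIio : Iio (sSup s) ⊆ s := fun x hx =>
      let ⟨y, hys, hxy⟩ := exists_lt_of_lt_csSup hne hx
      hs hxy.le hys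
    rcases mem_Iic_Iio_of_subset_of_subset hIio (fun x hx => le_csSup hbdd hx) with hs' | hs'
    · rw [hs']; exact h _
    · rw [hs']; exact abs_measureReal_Iio_sub_le h _
  · have huniv : s = univ := eq_univ_of_forall fun x =>
      let ⟨y, hys, hxy⟩ := not_bddAbove_iff.1 hbdd x
      hs hxy.le hys
    simpa [huniv] using hD

lemma Set.OrdConnected.abs_measureReal_sub_le {s : Set ℝ} (hs : s.OrdConnected)
    (h : ∀ x, |P.real (Iic x) - Q.real (Iic x)| ≤ D) :
    |P.real s - Q.real s| ≤ 2 * D := by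
  set L : Set ℝ := ↑(lowerClosure s)
  set U : Set ℝ := ↑(upperClosure s)
  have hL : IsLowerSet L := (lowerClosure s).lower
  have hLU : IsLowerSet (L \ U) := hL.inter (upperClosure s).upper.compl
  have hs' : s = L \ (L \ U) := by
    rw [sdiff_sdiff_right_self, inter_comm, hs.upperClosure_inter_lowerClosure]
  rw [hs']
  calc _ ≤ |P.real L - Q.real L| + |P.real (L \ U) - Q.real (L \ U)| :=
        abs_measureReal_sdiff_sub_le sdiff_subset hLU.ordConnected.measurableSet
    _ ≤ 2 * D := by linarith [hL.abs_measureReal_sub_le h, hLU.abs_measureReal_sub_le h]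

end CDFComparison

section RadialMonotone

variable {f : ℝ → ℝ}

lemma apply_le_apply_of_abs_le (heven : ∀ u, f (-u) = f u) (hmono : MonotoneOn f (Ici 0))
    {x y : ℝ} (hxy : |x| ≤ |y|) : f x ≤ f y := by
  have habs (z : ℝ) : f |z| = f z := by
    rcases abs_choice z with hz | hz <;> rw [hz]
    exact heven z
  rw [← habs x, ← habs y]
  exact hmono (abs_nonneg x) (abs_nonneg y) hxy

lemma measurable_of_abs_le_imp_le (hf : ∀ ⦃x y : ℝ⦄, |x| ≤ |y| → f x ≤ f y) : Measurable f := by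
  have hmono : Monotone fun u : ℝ => f (max u 0) := fun u v huv => hf <| by
    rw [abs_of_nonneg (le_max_right u 0), abs_of_nonneg (le_max_right v 0)]
    exact max_le_max huv le_rfl
  have hcomp : f = (fun u => f (max u 0)) ∘ fun x => |x| :=
    funext fun x => le_antisymm (hf (by simp)) (hf (by simp))
  rw [hcomp]
  exact hmono.measurable.comp measurable_abs

lemma ordConnected_setOf_le_of_abs_le_imp_le (hf : ∀ ⦃x y : ℝ⦄, |x| ≤ |y| → f x ≤ f y) (t : ℝ) :
    {x | f x ≤ t}.OrdConnected :=
  ⟨fun x hx y hy z hz => by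
    have hzxy := abs_le_max_abs_abs hz.1 hz.2
    rcases le_total |x| |y| with hle | hle
    · exact (hf (hzxy.trans (max_eq_right hle).le)).trans hy
    · exact (hf (hzxy.trans (max_eq_left hle).le)).trans hx⟩

end RadialMonotone

lemma abs_integral_sub_le_of_abs_measureReal_lt_sub_le {α : Type*} [MeasurableSpace α]
    [Nonempty α] {P Q : Measure α} [IsFiniteMeasure P] [IsFiniteMeasure Q] {g : α → ℝ} {L C : ℝ}
    (hg : Measurable g) (hg0 : ∀ x, 0 ≤ g x) (hgL : ∀ x, g x ≤ L)
    (hC : ∀ t ∈ Ioc 0 L, |P.real {x | t < g x} - Q.real {x | t < g x}| ≤ C) :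
    |∫ x, g x ∂P - ∫ x, g x ∂Q| ≤ C * L := by
  have hL : 0 ≤ L := (hg0 (Classical.arbitrary α)).trans (hgL _)
  have hlayer (ρ : Measure α) [IsFiniteMeasure ρ] :
      ∫ x, g x ∂ρ = ∫ t in Ioc 0 L, ρ.real {x | t < g x} := by
    have hint : Integrable g ρ :=
      .of_bound hg.aestronglyMeasurable L <| .of_forall fun x => by
        rw [Real.norm_of_nonneg (hg0 x)]; exact hgL x
    rw [hint.integral_eq_integral_meas_lt (.of_forall hg0)]
    refine setIntegral_eq_of_subset_of_forall_sdiff_eq_zero measurableSet_Ioi Ioc_subset_Ioi_self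
      fun t ht => ?_
    have hLt : L < t := lt_of_not_ge fun htL => ht.2 ⟨ht.1, htL⟩
    have hempty : {x | t < g x} = ∅ :=
      eq_empty_of_forall_notMem fun x hx => (hgL x).not_gt (hLt.trans hx)
    simp [hempty]
  have hint (ρ : Measure α) [IsFiniteMeasure ρ] :
      IntegrableOn (fun t => ρ.real {x | t < g x}) (Ioc 0 L) := by
    have hanti : Antitone fun t => ρ.real {x | t < g x} :=
      fun _ _ hts => measureReal_mono fun _ hx => hts.trans_lt hx
    refine Measure.integrableOn_of_bounded (M := ρ.real univ) measure_Ioc_lt_top.ne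
      hanti.measurable.aestronglyMeasurable (.of_forall fun t => ?_)
    rw [Real.norm_of_nonneg measureReal_nonneg]
    exact measureReal_mono (subset_univ _)
  rw [hlayer P, hlayer Q, ← integral_sub (hint P) (hint Q), ← Real.norm_eq_abs]
  calc _ ≤ C * volume.real (Ioc (0 : ℝ) L) :=
        norm_setIntegral_le_of_norm_le_const measure_Ioc_lt_top fun t ht => hC t ht
    _ = C * L := by rw [Real.volume_real_Ioc_of_le hL, sub_zero]

lemma abs_integral_sub_le_of_abs_measureReal_Iic_sub_le {P Q : Measure ℝ}
    [IsProbabilityMeasure P] [IsProbabilityMeasure Q] {D : ℝ}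
    (h : ∀ x, |P.real (Iic x) - Q.real (Iic x)| ≤ D) {f : ℝ → ℝ}
    (hf : ∀ ⦃x y : ℝ⦄, |x| ≤ |y| → f x ≤ f y) (hf0 : ∀ x, 0 ≤ f x)
    (hfP : Integrable f P) (hfQ : Integrable f Q) (A : ℝ) :
    |∫ x, f x ∂P - ∫ x, f x ∂Q|
      ≤ 4 * f A * D + ∫ x in {x | A ≤ |x|}, f x ∂P + ∫ x in {x | A ≤ |x|}, f x ∂Q := by
  set s : Set ℝ := {x | |x| < A}
  have hI : s.OrdConnected := by
    rw [show s = Ioo (-A) A by ext; simp [s, abs_lt]]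
    exact ordConnected_Ioo
  have hsplit (ρ : Measure ℝ) (hfρ : Integrable f ρ) :
      ∫ x, f x ∂ρ = ∫ x, s.indicator f x ∂ρ + ∫ x in {x | A ≤ |x|}, f x ∂ρ := by
    have hcompl : {x : ℝ | A ≤ |x|} = sᶜ := by ext; simp [s]
    rw [hcompl, integral_indicator hI.measurableSet, integral_add_compl hI.measurableSet hfρ]
  have hsuperlevel (t : ℝ) (ht : 0 ≤ t) :
      {x | t < s.indicator f x} = s \ (s ∩ {x | f x ≤ t}) := by
    ext x
    by_cases hx : x ∈ s <;> simp [indicator, hx, ht.not_gt]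
  have hcore : |∫ x, s.indicator f x ∂P - ∫ x, s.indicator f x ∂Q| ≤ 4 * D * f A := by
    refine abs_integral_sub_le_of_abs_measureReal_lt_sub_le
      ((measurable_of_abs_le_imp_le hf).indicator hI.measurableSet)
      (indicator_nonneg fun x _ => hf0 x) (fun x => ?_) fun t ht => ?_
    · by_cases hx : |x| < A
      · simpa [s, hx] using hf (hx.le.trans (le_abs_self A))
      · simpa [s, hx] using hf0 A
    · have hJ := hI.inter (ordConnected_setOf_le_of_abs_le_imp_le hf t)
      rw [hsuperlevel t ht.1.le]
      calc _ ≤ _ := abs_measureReal_sdiff_sub_le inter_subset_left hJ.measurableSet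
        _ ≤ 4 * D := by linarith [hI.abs_measureReal_sub_le h, hJ.abs_measureReal_sub_le h]
  have htail (ρ : Measure ℝ) : 0 ≤ ∫ x in {x | A ≤ |x|}, f x ∂ρ :=
    setIntegral_nonneg (measurableSet_le measurable_const measurable_abs) fun x _ => hf0 x
  obtain ⟨hlo, hhi⟩ := abs_le.1 hcore
  rw [hsplit P hfP, hsplit Q hfQ, abs_le]
  constructor <;> linarith [htail P, htail Q]

lemma abs_measureReal_sub_le_iSup {ι α β : Type*} [MeasurableSpace α] [MeasurableSpace β]
    {μ : Measure α} {ν : Measure β} [IsProbabilityMeasure μ] [IsProbabilityMeasure ν]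
    (s : ι → Set α) (t : ι → Set β) (i : ι) :
    |μ.real (s i) - ν.real (t i)| ≤ ⨆ j, |μ.real (s j) - ν.real (t j)| := by
  refine le_ciSup (f := fun j => |μ.real (s j) - ν.real (t j)|) ⟨1, ?_⟩ i
  rintro _ ⟨j, rfl⟩
  rw [abs_sub_le_iff]
  constructor <;> linarith [measureReal_nonneg (μ := μ) (s := s j),
    measureReal_nonneg (μ := ν) (s := t j), measureReal_le_one (μ := μ) (s := s j),
    measureReal_le_one (μ := ν) (s := t j)]

theorem stmt4_general {Ω₁ Ω₂ : Type*} [MeasurableSpace Ω₁] [MeasurableSpace Ω₂]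
    (μ : Measure Ω₁) (ν : Measure Ω₂) [IsProbabilityMeasure μ] [IsProbabilityMeasure ν]
    (ξ : Ω₁ → ℝ) (η : Ω₂ → ℝ) (hξ : Measurable ξ) (hη : Measurable η)
    (loss : ℝ → ℝ) (hnonneg : ∀ u, 0 ≤ loss u)
    (heven : ∀ u, loss (-u) = loss u)
    (hmono : MonotoneOn loss (Set.Ici (0 : ℝ)))
    (hint₁ : Integrable (fun ω => loss (ξ ω)) μ)
    (hint₂ : Integrable (fun ω => loss (η ω)) ν)
    (A : ℝ) :
    |(∫ ω, loss (ξ ω) ∂μ) - ∫ ω, loss (η ω) ∂ν|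
      ≤ 4 * loss A * (⨆ x : ℝ, |(μ {ω | ξ ω ≤ x}).toReal - (ν {ω | η ω ≤ x}).toReal|)
        + (∫ ω in {ω | A ≤ |ξ ω|}, loss (ξ ω) ∂μ)
        + ∫ ω in {ω | A ≤ |η ω|}, loss (η ω) ∂ν := by
  have hf : ∀ ⦃x y : ℝ⦄, |x| ≤ |y| → loss x ≤ loss y := fun _ _ =>
    apply_le_apply_of_abs_le heven hmono
  have hm := measurable_of_abs_le_imp_le hf
  have := Measure.isProbabilityMeasure_map (μ := μ) hξ.aemeasurable
  have := Measure.isProbabilityMeasure_map (μ := ν) hη.aemeasurable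
  have hcdf (x : ℝ) : |(μ.map ξ).real (Iic x) - (ν.map η).real (Iic x)|
      ≤ ⨆ x : ℝ, |(μ {ω | ξ ω ≤ x}).toReal - (ν {ω | η ω ≤ x}).toReal| := by
    rw [map_measureReal_apply hξ measurableSet_Iic, map_measureReal_apply hη measurableSet_Iic]
    exact abs_measureReal_sub_le_iSup (fun x => ξ ⁻¹' Iic x) (fun x => η ⁻¹' Iic x) x
  have htail : MeasurableSet {x : ℝ | A ≤ |x|} := measurableSet_le measurable_const measurable_abs
  have key := abs_integral_sub_le_of_abs_measureReal_Iic_sub_le hcdf hf hnonneg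
    ((integrable_map_measure hm.aestronglyMeasurable hξ.aemeasurable).2 hint₁)
    ((integrable_map_measure hm.aestronglyMeasurable hη.aemeasurable).2 hint₂) A
  rwa [integral_map hξ.aemeasurable hm.aestronglyMeasurable,
    integral_map hη.aemeasurable hm.aestronglyMeasurable,
    setIntegral_map htail hm.aestronglyMeasurable hξ.aemeasurable,
    setIntegral_map htail hm.aestronglyMeasurable hη.aemeasurable] at key

/-- Let `loss : ℝ → ℝ₊` be a loss function with `loss 0 = 0`, even,
nondecreasing and convex on `ℝ₊`. For random variables `ξ, η` (on possibly different
probability spaces) with Kolmogorov distance `Δ(ξ,η) := sup_x |P(ξ≤x) − P(η≤x)|` and any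
`A > 0`:
`|E loss(ξ) − E loss(η)| ≤ 4·loss(A)·Δ(ξ,η) + E[loss(ξ)·1{|ξ|≥A}] + E[loss(η)·1{|η|≥A}]`. -/
theorem stmt4 {Ω₁ Ω₂ : Type*} [MeasurableSpace Ω₁] [MeasurableSpace Ω₂]
    (μ : Measure Ω₁) (ν : Measure Ω₂) [IsProbabilityMeasure μ] [IsProbabilityMeasure ν]
    (ξ : Ω₁ → ℝ) (η : Ω₂ → ℝ) (hξ : Measurable ξ) (hη : Measurable η)
    (loss : ℝ → ℝ) (hnonneg : ∀ u, 0 ≤ loss u) (h0 : loss 0 = 0)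
    (heven : ∀ u, loss (-u) = loss u)
    (hmono : MonotoneOn loss (Set.Ici (0 : ℝ)))
    (hconv : ConvexOn ℝ (Set.Ici (0 : ℝ)) loss)
    (hint₁ : Integrable (fun ω => loss (ξ ω)) μ)
    (hint₂ : Integrable (fun ω => loss (η ω)) ν)
    (A : ℝ) (hA : 0 < A) :
    |(∫ ω, loss (ξ ω) ∂μ) - ∫ ω, loss (η ω) ∂ν|
      ≤ 4 * loss A * (⨆ x : ℝ, |(μ {ω | ξ ω ≤ x}).toReal - (ν {ω | η ω ≤ x}).toReal|)
        + (∫ ω in {ω | A ≤ |ξ ω|}, loss (ξ ω) ∂μ)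
        + ∫ ω in {ω | A ≤ |η ω|}, loss (η ω) ∂ν :=
  stmt4_general μ ν ξ η hξ hη loss hnonneg heven hmono hint₁ hint₂ A
end

section
/- Let W₁,...,W_k be positive semi-definite self-adjoint operators on a finite-dimensional inner product space, δ_i := ‖W_i − I‖ (operator norm), and V_i(t) := I + t(W_i^{1/2} − I) for t ∈ [0,1]. Let R(t₁,...,t_k) = V₁(t₁)···V_k(t_k). Then for any subset T ⊆ {t₁,...,t_k}, the partial derivative ∂_T R satisfies ‖∂_T R‖ ≤ (∏_{t_i∈T} δ_i/(1+δ_i)) · ∏_{i=1}^k (1+δ_i). -/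
open Matrix

attribute [local instance] Matrix.normedAddCommGroup Matrix.normedSpace

open scoped ComplexOrder in
/-- The square root of a positive semi-definite matrix, as `Matrix.PosSemidef.sqrt` was defined
in the older Mathlib (removed since). -/
noncomputable def Matrix.PosSemidef.sqrt {n 𝕜 : Type*} [Fintype n] [RCLike 𝕜] [DecidableEq n]
    {A : Matrix n n 𝕜} (hA : A.PosSemidef) : Matrix n n 𝕜 :=
  hA.1.eigenvectorUnitary.1 * diagonal ((↑) ∘ (√·) ∘ hA.1.eigenvalues) *
  (star hA.1.eigenvectorUnitary : Matrix n n 𝕜)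

/-- The operator norm (ℓ²→ℓ² norm) of a real matrix, via the associated continuous linear
map on Euclidean space. -/
noncomputable def matOpNorm {d : ℕ} (A : Matrix (Fin d) (Fin d) ℝ) : ℝ :=
  ‖Matrix.toEuclideanCLM (𝕜 := ℝ) A‖

/-- Iterated partial derivative `∂_T F` of a matrix-valued function of `k` real variables,
taken with respect to the (distinct) variables listed in `L`. -/
noncomputable def pderivSeq {d k : ℕ} (L : List (Fin k))
    (F : (Fin k → ℝ) → Matrix (Fin d) (Fin d) ℝ) : (Fin k → ℝ) → Matrix (Fin d) (Fin d) ℝ :=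
  L.foldr (fun i G => fun t => deriv (fun s => G (Function.update t i s)) (t i)) F

/-! Each factor `1 + uᵢ (√Wᵢ - 1)` is affine in its own variable, so `∂_T R` is the same product
with the factors indexed by `T` replaced by `√Wᵢ - 1`. Diagonalising `Wᵢ` by a unitary reduces
`‖√Wᵢ - 1‖ ≤ ‖Wᵢ - 1‖ = δᵢ` to the scalar inequality `|√x - 1| ≤ |x - 1|`. Hence the
differentiated factors have norm at most `δᵢ`, the others at most `1 + δᵢ`, and
submultiplicativity of the operator norm gives the bound. -/

section matOpNorm

variable {d : ℕ}

lemma matOpNorm_nonneg (A : Matrix (Fin d) (Fin d) ℝ) : 0 ≤ matOpNorm A := norm_nonneg _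

lemma matOpNorm_mul_le (A B : Matrix (Fin d) (Fin d) ℝ) :
    matOpNorm (A * B) ≤ matOpNorm A * matOpNorm B := by
  rw [matOpNorm, map_mul]
  exact norm_mul_le _ _

lemma matOpNorm_one_le : matOpNorm (1 : Matrix (Fin d) (Fin d) ℝ) ≤ 1 := by
  rw [matOpNorm, map_one, ContinuousLinearMap.one_def]
  exact ContinuousLinearMap.norm_id_le

lemma matOpNorm_one_add_smul_le (A : Matrix (Fin d) (Fin d) ℝ) {s : ℝ} (hs : |s| ≤ 1) :
    matOpNorm (1 + s • A) ≤ 1 + matOpNorm A := by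
  have hsA : matOpNorm (s • A) ≤ matOpNorm A := by
    rw [matOpNorm, map_smul, norm_smul, Real.norm_eq_abs]
    exact mul_le_of_le_one_left (norm_nonneg _) hs
  calc matOpNorm (1 + s • A) ≤ matOpNorm 1 + matOpNorm (s • A) := by
        rw [matOpNorm, matOpNorm, matOpNorm, map_add]
        exact norm_add_le _ _
    _ ≤ 1 + matOpNorm A := add_le_add matOpNorm_one_le hsA

lemma matOpNorm_list_prod_le {ι : Type*} (f : ι → Matrix (Fin d) (Fin d) ℝ) {c : ι → ℝ}
    (hc : ∀ i, 0 ≤ c i) (hfc : ∀ i, matOpNorm (f i) ≤ c i) :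
    ∀ l : List ι, matOpNorm (l.map f).prod ≤ (l.map c).prod
  | [] => by simpa using matOpNorm_one_le
  | i :: l => by
    rw [List.map_cons, List.prod_cons, List.map_cons, List.prod_cons]
    exact (matOpNorm_mul_le _ _).trans <| mul_le_mul (hfc i) (matOpNorm_list_prod_le f hc hfc l)
      (matOpNorm_nonneg _) (hc i)

-- `matOpNorm` is definitionally Mathlib's (scoped) L² operator norm on matrices, a C⋆-norm.
open scoped Matrix.Norms.L2Operator in
lemma matOpNorm_unitary_conj_diagonal (U : unitary (Matrix (Fin d) (Fin d) ℝ))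
    (v : Fin d → ℝ) :
    matOpNorm ((U : Matrix (Fin d) (Fin d) ℝ) * diagonal v * star (U : Matrix (Fin d) (Fin d) ℝ))
      = ‖v‖ := by
  rw [matOpNorm, Matrix.l2_opNorm_toEuclideanCLM, ← Unitary.coe_star,
    CStarRing.norm_mul_coe_unitary, CStarRing.norm_coe_unitary_mul, Matrix.l2_opNorm_diagonal]

end matOpNorm

lemma Matrix.unitary_conj_diagonal_sub_one {n R : Type*} [Fintype n] [DecidableEq n]
    [CommRing R] [StarRing R] (U : unitary (Matrix n n R)) (v : n → R) :
    (U : Matrix n n R) * diagonal v * star (U : Matrix n n R) - 1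
      = (U : Matrix n n R) * diagonal (v - 1) * star (U : Matrix n n R) := by
  have hdiag : diagonal (v - 1) = diagonal v - 1 := by
    rw [← diagonal_one]
    exact (diagonal_sub v 1).symm
  rw [hdiag, mul_sub, sub_mul, mul_one, Unitary.mul_star_self_of_mem U.2]

lemma Real.abs_sqrt_sub_one_le {x : ℝ} (hx : 0 ≤ x) : |√x - 1| ≤ |x - 1| := by
  have hfactor : x - 1 = (√x - 1) * (√x + 1) := by
    linear_combination -Real.sq_sqrt hx
  rw [hfactor, abs_mul]
  exact le_mul_of_one_le_right (abs_nonneg _)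
    (le_abs.mpr (Or.inl (le_add_of_nonneg_left (Real.sqrt_nonneg x))))

lemma Matrix.PosSemidef.matOpNorm_sqrt_sub_one_le {d : ℕ} {W : Matrix (Fin d) (Fin d) ℝ}
    (hW : W.PosSemidef) : matOpNorm (hW.sqrt - 1) ≤ matOpNorm (W - 1) := by
  set U := hW.1.eigenvectorUnitary
  set ev := hW.1.eigenvalues
  have hW_eq : W = U * diagonal ev * star (U : Matrix (Fin d) (Fin d) ℝ) := by
    simpa using hW.1.spectral_theorem
  have hsqrt_eq :
      hW.sqrt = U * diagonal (fun j => √(ev j)) * star (U : Matrix (Fin d) (Fin d) ℝ) := rfl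
  calc matOpNorm (hW.sqrt - 1) = ‖(fun j => √(ev j)) - 1‖ := by
        rw [hsqrt_eq, unitary_conj_diagonal_sub_one, matOpNorm_unitary_conj_diagonal]
    _ ≤ ‖ev - 1‖ := by
        refine (pi_norm_le_iff_of_nonneg (norm_nonneg _)).mpr fun j => ?_
        refine le_trans ?_ (norm_le_pi_norm (ev - 1) j)
        exact Real.abs_sqrt_sub_one_le (hW.eigenvalues_nonneg j)
    _ = matOpNorm (W - 1) := by
        rw [← matOpNorm_unitary_conj_diagonal, ← unitary_conj_diagonal_sub_one, ← hW_eq]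

theorem List.prod_map_update_add_smul {ι 𝕜 R : Type*} [DecidableEq ι] [CommSemiring 𝕜]
    [Semiring R] [Algebra 𝕜 R] {l : List ι} (hl : l.Nodup) {j : ι} (hj : j ∈ l)
    (f : ι → R) (a b : R) (s : 𝕜) :
    (l.map (Function.update f j (a + s • b))).prod
      = (l.map (Function.update f j a)).prod + s • (l.map (Function.update f j b)).prod := by
  induction l with
  | nil => simp at hj
  | cons i l ih =>
    obtain ⟨hil, hl⟩ := List.nodup_cons.mp hl
    simp only [List.map_cons, List.prod_cons]
    by_cases hij : i = j
    · subst hij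
      have htail : ∀ x, l.map (Function.update f i x) = l.map f := fun x =>
        List.map_congr_left fun m hm => Function.update_of_ne (ne_of_mem_of_not_mem hm hil) _ _
      simp only [htail, Function.update_self, add_mul, smul_mul_assoc]
    · rw [ih hl ((List.mem_cons.mp hj).resolve_left (Ne.symm hij)),
        Function.update_of_ne hij, Function.update_of_ne hij, Function.update_of_ne hij,
        mul_add, mul_smul_comm]

section AffineProduct

variable {d k : ℕ}

noncomputable def affineProdDeriv (A : Fin k → Matrix (Fin d) (Fin d) ℝ) (L : List (Fin k))
    (u : Fin k → ℝ) : Matrix (Fin d) (Fin d) ℝ :=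
  ((List.finRange k).map fun i => if i ∈ L then A i else 1 + u i • A i).prod

lemma affineProdDeriv_update (A : Fin k → Matrix (Fin d) (Fin d) ℝ) {L : List (Fin k)}
    {j : Fin k} (hj : j ∉ L) (t : Fin k → ℝ) (s : ℝ) :
    affineProdDeriv A L (Function.update t j s)
      = affineProdDeriv A L (Function.update t j 0) + s • affineProdDeriv A (j :: L) t := by
  set g : Fin k → Matrix (Fin d) (Fin d) ℝ := fun i => if i ∈ L then A i else 1 + t i • A i
  have hfactors : ∀ x, (fun i => if i ∈ L then A i else 1 + Function.update t j x i • A i)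
      = Function.update g j (1 + x • A j) := by
    intro x
    funext i
    by_cases hij : i = j
    · subst hij; simp [hj]
    · simp [hij, g]
  have hderiv :
      (fun i => if i ∈ j :: L then A i else 1 + t i • A i) = Function.update g j (A j) := by
    funext i
    by_cases hij : i = j
    · subst hij; simp
    · simp [hij, g]
  simp only [affineProdDeriv, hfactors, hderiv, zero_smul, add_zero]
  exact List.prod_map_update_add_smul (List.nodup_finRange k) (List.mem_finRange j) g 1 (A j) s

lemma pderivSeq_affineProdDeriv (A : Fin k → Matrix (Fin d) (Fin d) ℝ) {L : List (Fin k)}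
    (hL : L.Nodup) (t : Fin k → ℝ) :
    pderivSeq L (affineProdDeriv A []) t = affineProdDeriv A L t := by
  induction L generalizing t with
  | nil => rfl
  | cons j L ih =>
    obtain ⟨hjL, hL⟩ := List.nodup_cons.mp hL
    set C := affineProdDeriv A L (Function.update t j 0)
    set D := affineProdDeriv A (j :: L) t
    have hline : (fun s => pderivSeq L (affineProdDeriv A []) (Function.update t j s))
        = fun s => C + s • D := by
      funext s
      rw [ih hL, affineProdDeriv_update A hjL]
    have hD : HasDerivAt (fun s : ℝ => C + s • D) D (t j) :=
      (((hasDerivAt_id (t j)).smul_const D).const_add C).congr_deriv (one_smul ℝ D)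
    exact (congrArg (deriv · (t j)) hline).trans hD.deriv

end AffineProduct

lemma Finset.prod_ite_mem_eq_prod_div_mul_prod {ι K : Type*} [Fintype ι] [DecidableEq ι]
    [Field K] (S : Finset ι) {δ : ι → K} (hδ : ∀ i ∈ S, 1 + δ i ≠ 0) :
    ∏ i, (if i ∈ S then δ i else 1 + δ i) = (∏ i ∈ S, δ i / (1 + δ i)) * ∏ i, (1 + δ i) := by
  calc ∏ i, (if i ∈ S then δ i else 1 + δ i)
      = ∏ i, (if i ∈ S then δ i / (1 + δ i) else 1) * (1 + δ i) := by
        refine prod_congr rfl fun i _ => ?_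
        split_ifs with hi
        · rw [div_mul_cancel₀ _ (hδ i hi)]
        · rw [one_mul]
    _ = (∏ i ∈ S, δ i / (1 + δ i)) * ∏ i, (1 + δ i) := by
        rw [prod_mul_distrib, prod_ite_mem, univ_inter]

/-- Let `W₁,…,W_k` be positive semi-definite, `δ_i := ‖W_i − I‖`
(operator norm), `V_i(t) := I + t(W_i^{1/2} − I)`, and `R(t₁,…,t_k) = V₁(t₁)⋯V_k(t_k)`.
Then for any subset `T ⊆ {t₁,…,t_k}` (given by a duplicate-free list `L`) and any
`t ∈ [0,1]^k`:
`‖∂_T R‖ ≤ (∏_{i∈T} δ_i/(1+δ_i)) · ∏_{i=1}^k (1+δ_i)`. -/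
theorem stmt13 {d k : ℕ} (W : Fin k → Matrix (Fin d) (Fin d) ℝ)
    (hW : ∀ i, (W i).PosSemidef)
    (L : List (Fin k)) (hL : L.Nodup)
    (t : Fin k → ℝ) (ht : ∀ i, t i ∈ Set.Icc (0 : ℝ) 1) :
    matOpNorm
        (pderivSeq L
          (fun u => ((List.finRange k).map
            (fun i => (1 : Matrix (Fin d) (Fin d) ℝ) + u i • ((hW i).sqrt - 1))).prod) t)
      ≤ (∏ i ∈ L.toFinset, matOpNorm (W i - 1) / (1 + matOpNorm (W i - 1)))
          * ∏ i : Fin k, (1 + matOpNorm (W i - 1)) := by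
  have hδ : ∀ i, 0 ≤ matOpNorm (W i - 1) := fun i => matOpNorm_nonneg _
  have hR : (fun u => ((List.finRange k).map
      (fun i => (1 : Matrix (Fin d) (Fin d) ℝ) + u i • ((hW i).sqrt - 1))).prod)
      = affineProdDeriv (fun i => (hW i).sqrt - 1) [] := by
    funext u
    simp [affineProdDeriv]
  have hδ_ne : ∀ i ∈ L.toFinset, 1 + matOpNorm (W i - 1) ≠ 0 := fun i _ =>
    (add_pos_of_pos_of_nonneg one_pos (hδ i)).ne'
  rw [hR, pderivSeq_affineProdDeriv _ hL,
    ← Finset.prod_ite_mem_eq_prod_div_mul_prod _ hδ_ne, Fin.prod_univ_def]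
  refine matOpNorm_list_prod_le _ (fun i => ?_) (fun i => ?_) _
  · split_ifs
    exacts [hδ i, add_nonneg zero_le_one (hδ i)]
  · have hsqrt := (hW i).matOpNorm_sqrt_sub_one_le
    by_cases hi : i ∈ L
    · simpa [hi] using hsqrt
    · have hti : |t i| ≤ 1 := abs_le.mpr ⟨by linarith [(ht i).1], (ht i).2⟩
      simpa [hi] using (matOpNorm_one_add_smul_le _ hti).trans (add_le_add_right hsqrt 1)
end

section
/- Let Σ be a covariance operator and let Σ̂ = n^{-1}Σ_{j=1}^n X_j⊗X_j and Σ̂' = n^{-1}Σ_{j=1}^n X_j'⊗X_j' be the sample covariances of vectors X_j and X_j' respectively; with E := Σ̂ − Σ and E' := Σ̂' − Σ, one has ‖E' − E‖ ≤ (‖Σ̂‖^{1/2} + ‖Σ̂'‖^{1/2}) · n^{-1/2} · (Σ_{j=1}^n ‖X_j − X_j'‖²)^{1/2}. -/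
open scoped InnerProductSpace

/-- The rank-one operator `u ⊗ v : x ↦ ⟨v,x⟩·u` on a real Hilbert space. -/
noncomputable def outerProd {H : Type*} [NormedAddCommGroup H] [InnerProductSpace ℝ H]
    (u v : H) : H →L[ℝ] H :=
  ((innerSL ℝ) v).smulRight u

/-- The sample covariance `Σ̂ = n⁻¹ ∑_{j=1}^n X_j ⊗ X_j` of points `X₁,…,Xₙ`. -/
noncomputable def sampleCov {H : Type*} [NormedAddCommGroup H] [InnerProductSpace ℝ H]
    (n : ℕ) (X : Fin n → H) : H →L[ℝ] H :=
  (n : ℝ)⁻¹ • ∑ j, outerProd (X j) (X j)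

lemma outerProd_apply {H : Type*} [NormedAddCommGroup H] [InnerProductSpace ℝ H]
    (u v x : H) : outerProd u v x = ⟪v, x⟫_ℝ • u := rfl

/-- Quadratic form bound: `n⁻¹ ∑ ⟪Y j, u⟫² ≤ ‖Σ̂_Y‖ ‖u‖²`. -/
lemma quad_bound {H : Type*} [NormedAddCommGroup H] [InnerProductSpace ℝ H]
    (n : ℕ) (Y : Fin n → H) (u : H) :
    (n : ℝ)⁻¹ * ∑ j, ⟪Y j, u⟫_ℝ ^ 2 ≤ ‖sampleCov n Y‖ * ‖u‖ ^ 2 := by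
  have h1 : (n : ℝ)⁻¹ * ∑ j, ⟪Y j, u⟫_ℝ ^ 2 = ⟪(sampleCov n Y) u, u⟫_ℝ := by
    simp [sampleCov, ContinuousLinearMap.sum_apply, outerProd_apply, sum_inner,
      real_inner_smul_left, pow_two, real_inner_comm (Y _) u]
  rw [h1]
  calc ⟪(sampleCov n Y) u, u⟫_ℝ ≤ ‖(sampleCov n Y) u‖ * ‖u‖ := real_inner_le_norm _ _
    _ ≤ ‖sampleCov n Y‖ * ‖u‖ * ‖u‖ := by
        gcongr; exact (sampleCov n Y).le_opNorm u
    _ = ‖sampleCov n Y‖ * ‖u‖ ^ 2 := by ring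

/-- Key lemma: operator norm of a sum of cross rank-one terms. -/
lemma key {H : Type*} [NormedAddCommGroup H] [InnerProductSpace ℝ H]
    (n : ℕ) (D Y : Fin n → H) :
    ‖(n : ℝ)⁻¹ • ∑ j, outerProd (D j) (Y j)‖
      ≤ Real.sqrt ‖sampleCov n Y‖ / Real.sqrt n * Real.sqrt (∑ j, ‖D j‖ ^ 2) := by
  apply ContinuousLinearMap.opNorm_le_bound _ (by positivity)
  intro u
  rcases Nat.eq_zero_or_pos n with hn | hn
  · subst hn
    simp
  have hn0 : (0 : ℝ) < n := by exact_mod_cast hn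
  have hsn : (0 : ℝ) < Real.sqrt n := Real.sqrt_pos.2 hn0
  have hmul : Real.sqrt n * Real.sqrt n = (n : ℝ) := Real.mul_self_sqrt hn0.le
  have hA : Real.sqrt (∑ j, ⟪Y j, u⟫_ℝ ^ 2)
      ≤ Real.sqrt n * Real.sqrt ‖sampleCov n Y‖ * ‖u‖ := by
    have h2 : (∑ j, ⟪Y j, u⟫_ℝ ^ 2) ≤ (n : ℝ) * (‖sampleCov n Y‖ * ‖u‖ ^ 2) := by
      have := quad_bound n Y u
      rw [inv_mul_le_iff₀ hn0] at this
      linarith [this]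
    calc Real.sqrt (∑ j, ⟪Y j, u⟫_ℝ ^ 2)
        ≤ Real.sqrt ((n : ℝ) * (‖sampleCov n Y‖ * ‖u‖ ^ 2)) := Real.sqrt_le_sqrt h2
      _ = Real.sqrt n * (Real.sqrt ‖sampleCov n Y‖ * Real.sqrt (‖u‖ ^ 2)) := by
          rw [Real.sqrt_mul (by positivity), Real.sqrt_mul (norm_nonneg _)]
      _ = Real.sqrt n * Real.sqrt ‖sampleCov n Y‖ * ‖u‖ := by
          rw [Real.sqrt_sq (norm_nonneg _)]; ring
  calc ‖((n : ℝ)⁻¹ • ∑ j, outerProd (D j) (Y j)) u‖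
      = (n : ℝ)⁻¹ * ‖∑ j, ⟪Y j, u⟫_ℝ • D j‖ := by
        simp [ContinuousLinearMap.sum_apply, outerProd_apply, norm_smul,
          abs_of_nonneg (inv_nonneg.2 hn0.le)]
    _ ≤ (n : ℝ)⁻¹ * ∑ j, |⟪Y j, u⟫_ℝ| * ‖D j‖ := by
        gcongr
        refine (norm_sum_le _ _).trans (le_of_eq ?_)
        simp [norm_smul]
    _ ≤ (n : ℝ)⁻¹ * (Real.sqrt (∑ j, |⟪Y j, u⟫_ℝ| ^ 2) * Real.sqrt (∑ j, ‖D j‖ ^ 2)) := by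
        gcongr
        exact Real.sum_mul_le_sqrt_mul_sqrt _ _ _
    _ = (n : ℝ)⁻¹ * (Real.sqrt (∑ j, ⟪Y j, u⟫_ℝ ^ 2) * Real.sqrt (∑ j, ‖D j‖ ^ 2)) := by
        simp [sq_abs]
    _ ≤ (n : ℝ)⁻¹ * ((Real.sqrt n * Real.sqrt ‖sampleCov n Y‖ * ‖u‖) * Real.sqrt (∑ j, ‖D j‖ ^ 2)) := by
        gcongr
    _ = Real.sqrt ‖sampleCov n Y‖ / Real.sqrt n * Real.sqrt (∑ j, ‖D j‖ ^ 2) * ‖u‖ := by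
        rw [show ((n : ℝ))⁻¹ = (Real.sqrt n)⁻¹ * (Real.sqrt n)⁻¹ by
          rw [← mul_inv, hmul]]
        field_simp

lemma adjoint_outerProd {H : Type*} [NormedAddCommGroup H] [InnerProductSpace ℝ H]
    [CompleteSpace H] (a b : H) :
    ContinuousLinearMap.adjoint (outerProd a b) = outerProd b a := by
  refine ((ContinuousLinearMap.eq_adjoint_iff _ _).2 fun x y => ?_).symm
  simp [outerProd_apply, real_inner_smul_left, real_inner_smul_right]
  rw [real_inner_comm a x]
  ring

/-- For sample covariances `Σ̂, Σ̂'` of points `X₁,…,Xₙ` and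
`X₁',…,Xₙ'`, with `E := Σ̂ − Σ` and `E' := Σ̂' − Σ`:
`‖E' − E‖ ≤ (‖Σ̂‖^{1/2} + ‖Σ̂'‖^{1/2}) · n^{-1/2} · (∑_j ‖X_j − X_j'‖²)^{1/2}`. -/
theorem stmt15 {H : Type*} [NormedAddCommGroup H] [InnerProductSpace ℝ H] [CompleteSpace H]
    (n : ℕ) (X X' : Fin n → H) (S₀ : H →L[ℝ] H) :
    ‖(sampleCov n X' - S₀) - (sampleCov n X - S₀)‖
      ≤ (Real.sqrt ‖sampleCov n X‖ + Real.sqrt ‖sampleCov n X'‖) / Real.sqrt n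
          * Real.sqrt (∑ j, ‖X j - X' j‖ ^ 2) := by
  have hE : (sampleCov n X' - S₀) - (sampleCov n X - S₀) = sampleCov n X' - sampleCov n X := by
    abel
  set D : Fin n → H := fun j => X' j - X j with hD
  have hsum : (∑ j, ‖X j - X' j‖ ^ 2) = ∑ j, ‖D j‖ ^ 2 := by
    simp [hD, norm_sub_rev (X _) (X' _)]
  have hdecomp : sampleCov n X' - sampleCov n X
      = ((n : ℝ)⁻¹ • ∑ j, outerProd (D j) (X' j))
        + ((n : ℝ)⁻¹ • ∑ j, outerProd (X j) (D j)) := by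
    rw [sampleCov, sampleCov, ← smul_sub, ← smul_add, ← Finset.sum_sub_distrib,
      ← Finset.sum_add_distrib]
    congr 1
    refine Finset.sum_congr rfl fun j _ => ?_
    ext x
    simp [outerProd_apply, hD, inner_sub_left, sub_smul, smul_sub]
  have hA2 : ‖(n : ℝ)⁻¹ • ∑ j, outerProd (X j) (D j)‖
      = ‖(n : ℝ)⁻¹ • ∑ j, outerProd (D j) (X j)‖ := by
    rw [← LinearIsometryEquiv.norm_map (ContinuousLinearMap.adjoint
      (𝕜 := ℝ) (E := H) (F := H)) ((n : ℝ)⁻¹ • ∑ j, outerProd (X j) (D j))]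
    congr 1
    simp only [LinearIsometryEquiv.map_smulₛₗ, map_sum, starRingEnd_apply, star_trivial]
    congr 1
    exact Finset.sum_congr rfl fun j _ => adjoint_outerProd _ _
  rw [hE, hdecomp, hsum]
  calc ‖((n : ℝ)⁻¹ • ∑ j, outerProd (D j) (X' j))
        + ((n : ℝ)⁻¹ • ∑ j, outerProd (X j) (D j))‖
      ≤ ‖(n : ℝ)⁻¹ • ∑ j, outerProd (D j) (X' j)‖
        + ‖(n : ℝ)⁻¹ • ∑ j, outerProd (X j) (D j)‖ := norm_add_le _ _
    _ = ‖(n : ℝ)⁻¹ • ∑ j, outerProd (D j) (X' j)‖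
        + ‖(n : ℝ)⁻¹ • ∑ j, outerProd (D j) (X j)‖ := by rw [hA2]
    _ ≤ Real.sqrt ‖sampleCov n X'‖ / Real.sqrt n * Real.sqrt (∑ j, ‖D j‖ ^ 2)
        + Real.sqrt ‖sampleCov n X‖ / Real.sqrt n * Real.sqrt (∑ j, ‖D j‖ ^ 2) :=
          add_le_add (key n D X') (key n D X)
    _ = (Real.sqrt ‖sampleCov n X‖ + Real.sqrt ‖sampleCov n X'‖) / Real.sqrt n
          * Real.sqrt (∑ j, ‖D j‖ ^ 2) := by ring
end
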